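/- arXiv:2411.08204 — 3 statements merged into one kernel-verified Lean document; each statement's English description precedes it below -/
import Mathlib

section
/- Let G be a connected graph with shortest-path metric d_G, let v be any vertex, and let c₁,…,c_K be vertices in a square S of side length ℓ with pairwise graph distances greater than ℓ/2. For each i, let σ_i be the terminal portion of a shortest path from v to c_i consisting of the points within graph distance ℓ/4 of c_i. Then the curves σ_i are pairwise disjoint, each σ_i lies within the square 2S (S scaled by factor 2 about its centre), and at most one σ_i has length less than ℓ/4. Consequently the total length of edges of G intersecting 2S is at least (K−1)·ℓ/4. -/
/-! Points of `σ i` lie within `ℓ/4` of `c i`, so the `ℓ/2`-separation of the centres makes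
the `σ i` disjoint, and since `φ` is 1-Lipschitz they stay in `2S`. A short `σ i` can only
occur when `v` is within `ℓ/4` of `c i`, which by separation happens for at most one `i`.
Adding up the lengths of the disjoint `σ i` inside `2S` gives the bound. -/

open Metric Set MeasureTheory

noncomputable section

abbrev Pt := EuclideanSpace ℝ (Fin 2)

/-- Axis-parallel square of side length `ℓ` centred at `c`. -/
def Square (c : Pt) (ℓ : ℝ) : Set Pt := {p : Pt | ∀ i, |p i - c i| ≤ ℓ / 2}

open Function
open scoped ENNReal

lemma square_mono {c : Pt} {s t : ℝ} (hst : s ≤ t) : Square c s ⊆ Square c t :=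
  fun _ hp i => (hp i).trans (by linarith)

lemma mem_square_of_dist_le {c p q : Pt} {s r : ℝ} (hq : q ∈ Square c s) (hpq : dist p q ≤ r) :
    p ∈ Square c (s + 2 * r) := by
  intro i
  have hpqi : |p i - q i| ≤ r := (PiLp.dist_apply_le p q i).trans hpq
  calc |p i - c i| = |(p i - q i) + (q i - c i)| := by ring_nf
    _ ≤ |p i - q i| + |q i - c i| := abs_add_le _ _
    _ ≤ r + s / 2 := add_le_add hpqi (hq i)
    _ = (s + 2 * r) / 2 := by ring

lemma subsingleton_setOf_dist_lt {X ι : Type*} [PseudoMetricSpace X] {v : X} {c : ι → X}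
    {r : ℝ} (hsep : ∀ i j, i ≠ j → r + r < dist (c i) (c j)) :
    {i | dist v (c i) < r}.Subsingleton := by
  intro i (hi : dist v (c i) < r) j (hj : dist v (c j) < r)
  by_contra hij
  linarith [hsep i j hij, dist_triangle_left (c i) (c j) v]

lemma card_sub_one_mul_le_sum {ι : Type*} [Fintype ι] {f : ι → ℝ≥0∞} {m : ℝ≥0∞}
    (hsmall : {i | f i < m}.Subsingleton) :
    ((Fintype.card ι - 1 : ℕ) : ℝ≥0∞) * m ≤ ∑ i, f i := by
  classical
  set B := Finset.univ.filter (fun i => f i < m)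
  have hB : B.card ≤ 1 := Finset.card_le_one.mpr fun a ha b hb =>
    hsmall (Finset.mem_filter.mp ha).2 (Finset.mem_filter.mp hb).2
  have hcard : Fintype.card ι - 1 ≤ Bᶜ.card := by
    rw [Finset.card_compl]; omega
  calc ((Fintype.card ι - 1 : ℕ) : ℝ≥0∞) * m ≤ Bᶜ.card * m := by gcongr
    _ = ∑ _i ∈ Bᶜ, m := by rw [Finset.sum_const, nsmul_eq_mul]
    _ ≤ ∑ i ∈ Bᶜ, f i := Finset.sum_le_sum fun i hi => by simpa [B] using hi
    _ ≤ ∑ i, f i := Finset.sum_le_sum_of_subset (Finset.subset_univ _)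

lemma card_sub_one_mul_le_measure_of_pairwiseDisjoint {X ι : Type*} [MeasurableSpace X]
    [Fintype ι] {μ : Measure X} {σ : ι → Set X} {T : Set X} {m : ℝ≥0∞}
    (hdisj : Pairwise (Disjoint on σ)) (hmeas : ∀ i, MeasurableSet (σ i)) (hT : ∀ i, σ i ⊆ T)
    (hsmall : {i | μ (σ i) < m}.Subsingleton) :
    ((Fintype.card ι - 1 : ℕ) : ℝ≥0∞) * m ≤ μ T :=
  calc ((Fintype.card ι - 1 : ℕ) : ℝ≥0∞) * m ≤ ∑ i, μ (σ i) := card_sub_one_mul_le_sum hsmall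
    _ = μ (⋃ i, σ i) := by rw [measure_iUnion hdisj hmeas, tsum_fintype]
    _ ≤ μ T := measure_mono (iUnion_subset hT)

lemma ofReal_sub_one_mul_le {K : ℕ} {a : ℝ} (ha : 0 ≤ a) :
    ENNReal.ofReal ((K - 1 : ℝ) * a) ≤ ((K - 1 : ℕ) : ℝ≥0∞) * ENNReal.ofReal a := by
  rw [← ENNReal.ofReal_natCast, ← ENNReal.ofReal_mul (Nat.cast_nonneg _)]
  gcongr
  rcases K with _ | K <;> simp

theorem stmt7_general {X : Type*} [PseudoMetricSpace X] [MeasurableSpace X]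
    (μ : Measure X) (φ : X → Pt)
    (hφ : ∀ x y : X, dist (φ x) (φ y) ≤ dist x y)
    (v : X) (c₀ : Pt) (ℓ : ℝ) (hℓ : 0 < ℓ)
    (K : ℕ) (c : Fin K → X)
    (hcS : ∀ i, φ (c i) ∈ Square c₀ ℓ)
    (hsep : ∀ i j : Fin K, i ≠ j → ℓ / 2 < dist (c i) (c j))
    (σ : Fin K → Set X)
    (hσmeas : ∀ i, MeasurableSet (σ i))
    (hσnear : ∀ i, ∀ x ∈ σ i, dist x (c i) ≤ ℓ / 4)
    (hσlen : ∀ i, ℓ / 4 ≤ dist v (c i) → μ (σ i) = ENNReal.ofReal (ℓ / 4))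
    :
    (∀ i j : Fin K, i ≠ j → Disjoint (σ i) (σ j)) ∧
    (∀ i, ∀ x ∈ σ i, φ x ∈ Square c₀ (2 * ℓ)) ∧
    {i : Fin K | μ (σ i) < ENNReal.ofReal (ℓ / 4)}.Subsingleton ∧
    ENNReal.ofReal ((K - 1 : ℝ) * ℓ / 4) ≤ μ {x : X | φ x ∈ Square c₀ (2 * ℓ)} := by
  have hsep₄ : ∀ i j, i ≠ j → ℓ / 4 + ℓ / 4 < dist (c i) (c j) := fun i j hij => by
    linarith [hsep i j hij]
  have hdisj : ∀ i j : Fin K, i ≠ j → Disjoint (σ i) (σ j) := fun i j hij =>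
    (closedBall_disjoint_closedBall (hsep₄ i j hij)).mono (hσnear i) (hσnear j)
  have hsq : ∀ i, ∀ x ∈ σ i, φ x ∈ Square c₀ (2 * ℓ) := fun i x hx =>
    square_mono (by linarith) <|
      mem_square_of_dist_le (hcS i) ((hφ x (c i)).trans (hσnear i x hx))
  have hsmall : {i : Fin K | μ (σ i) < ENNReal.ofReal (ℓ / 4)}.Subsingleton := by
    refine (subsingleton_setOf_dist_lt (v := v) hsep₄).anti fun i (hi : μ (σ i) < _) => ?_
    by_contra hfar
    exact hi.ne (hσlen i (not_lt.mp hfar))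
  refine ⟨hdisj, hsq, hsmall, ?_⟩
  calc ENNReal.ofReal ((K - 1 : ℝ) * ℓ / 4)
      ≤ ((K - 1 : ℕ) : ℝ≥0∞) * ENNReal.ofReal (ℓ / 4) := by
        rw [mul_div_assoc]; exact ofReal_sub_one_mul_le (by positivity)
    _ ≤ μ {x : X | φ x ∈ Square c₀ (2 * ℓ)} := by
        have := card_sub_one_mul_le_measure_of_pairwiseDisjoint hdisj hσmeas
          (T := {x | φ x ∈ Square c₀ (2 * ℓ)}) hsq hsmall
        rwa [Fintype.card_fin] at this

/-- Disjoint shortest-path pieces near well-spaced centres.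
`X` is the embedded graph viewed as a metric space (its points are the vertices and the
points in the interiors of the edges), with shortest-path metric `dist`, length measure
`μ`, and embedding `φ : X → ℝ²` which does not increase distances.  The centres
`c 0, …, c (K-1)` lie in the square `S` of side `ℓ` centred at `c₀` and have pairwise
graph distance `> ℓ/2`.  For each `i`, `σ i` is the terminal portion of a shortest path
from `v` to `c i` consisting of the points within graph distance `ℓ/4` of `c i`; in
particular every point `x ∈ σ i` satisfies `dist v x + dist x (c i) = dist v (c i)`,
and `σ i` has length `ℓ/4` whenever `dist v (c i) ≥ ℓ/4`.
Then: the `σ i` are pairwise disjoint, each `σ i` lies (via `φ`) in the square `2S`,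
at most one `σ i` has length less than `ℓ/4`, and consequently the total length of the
portion of the graph inside `2S` is at least `(K-1)·ℓ/4`. -/
theorem stmt7 {X : Type*} [PseudoMetricSpace X] [MeasurableSpace X]
    (μ : Measure X) (φ : X → Pt)
    (hφ : ∀ x y : X, dist (φ x) (φ y) ≤ dist x y)
    (v : X) (c₀ : Pt) (ℓ : ℝ) (hℓ : 0 < ℓ)
    (K : ℕ) (c : Fin K → X)
    (hcS : ∀ i, φ (c i) ∈ Square c₀ ℓ)
    (hsep : ∀ i j : Fin K, i ≠ j → ℓ / 2 < dist (c i) (c j))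
    (σ : Fin K → Set X)
    (hσmeas : ∀ i, MeasurableSet (σ i))
    (hσnear : ∀ i, ∀ x ∈ σ i, dist x (c i) ≤ ℓ / 4)
    (hσpath : ∀ i, ∀ x ∈ σ i, dist v x + dist x (c i) = dist v (c i))
    (hσlen : ∀ i, ℓ / 4 ≤ dist v (c i) → μ (σ i) = ENNReal.ofReal (ℓ / 4))
    :
    (∀ i j : Fin K, i ≠ j → Disjoint (σ i) (σ j)) ∧
    (∀ i, ∀ x ∈ σ i, φ x ∈ Square c₀ (2 * ℓ)) ∧
    {i : Fin K | μ (σ i) < ENNReal.ofReal (ℓ / 4)}.Subsingleton ∧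
    ENNReal.ofReal ((K - 1 : ℝ) * ℓ / 4) ≤ μ {x : X | φ x ∈ Square c₀ (2 * ℓ)} :=
  stmt7_general μ φ hφ v c₀ ℓ hℓ K c hcS hsep σ hσmeas hσnear hσlen
end
end

section
/- In a λ-low-density graph with n vertices, the number of edges whose intersection with a square S of side length ℓ has length in the range [ℓ/2^j, 2ℓ/2^j] (for an integer j ≥ 0) and which have both endpoints in 3S is at most 2^{2j+2}·λ, and hence the total length of the intersections with S of such edges is at most 2^{j+3}·λ·ℓ. -/
/-!
Cover `S` by `4^(j+1)` discs of radius `ℓ/2^j` centred at the corners of a grid of spacing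
`ℓ/2^(j+1)`. An edge whose trace on `S` has diameter at least `ℓ/2^j` is at least that long and
meets one of these discs, and by low density each disc meets at most `λ` such edges. Each trace
has length at most `2ℓ/2^j`, which gives the bound on the total length.
-/

open Metric Set
open scoped Classical

noncomputable section

/-- The straight-line embedding of an edge. -/
def seg (e : Pt × Pt) : Set Pt := segment ℝ e.1 e.2

/-- A graph, given by its edge set embedded with straight-line edges, is
`λ`-low-density if for every radius `r > 0` and every ball of radius `r`,
at most `λ` edges of length at least `r` intersect the ball. -/
def LowDensity (lam : ℕ) (E : Finset (Pt × Pt)) : Prop :=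
  ∀ r : ℝ, 0 < r → ∀ c : Pt,
    {e : Pt × Pt | e ∈ E ∧ r ≤ dist e.1 e.2 ∧ (seg e ∩ closedBall c r).Nonempty}.ncard ≤ lam

lemma diam_seg (e : Pt × Pt) : Metric.diam (seg e) = dist e.1 e.2 := by
  rw [seg, ← convexHull_pair, convexHull_diam, Metric.diam_pair]

lemma isBounded_seg (e : Pt × Pt) : Bornology.IsBounded (seg e) := by
  rw [seg, ← convexHull_pair, isBounded_convexHull]
  exact (Set.toFinite _).isBounded

lemma exists_lt_abs_sub_nat_mul_le {d t : ℝ} (hd : 0 < d) {N : ℕ} (hN : 0 < N)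
    (ht : 0 ≤ t) (htN : t ≤ N * d) : ∃ k < N, |t - k * d| ≤ d := by
  have hfloor_le : (⌊t / d⌋₊ : ℝ) * d ≤ t := (le_div_iff₀ hd).1 (Nat.floor_le (by positivity))
  have hlt_floor : t < (⌊t / d⌋₊ + 1 : ℝ) * d := (div_lt_iff₀ hd).1 (Nat.lt_floor_add_one _)
  rcases lt_or_ge ⌊t / d⌋₊ N with h | h
  · exact ⟨_, h, abs_le.2 ⟨by nlinarith, by nlinarith⟩⟩
  · -- `⌊t / d⌋₊ ≥ N` forces `t = N * d`, the right end of the interval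
    have hN' : (N : ℝ) ≤ ⌊t / d⌋₊ := by exact_mod_cast h
    refine ⟨N - 1, Nat.sub_lt hN one_pos, ?_⟩
    rw [Nat.cast_pred hN, abs_le]
    constructor <;> nlinarith

def gridPt (c : Pt) (ℓ : ℝ) (N : ℕ) (k : Fin 2 → Fin N) : Pt :=
  WithLp.toLp 2 fun i => c i - ℓ / 2 + (k i : ℕ) * (ℓ / N)

lemma exists_dist_gridPt_le {c p : Pt} {ℓ : ℝ} (hℓ : 0 < ℓ) {N : ℕ} (hN : 0 < N)
    (hp : p ∈ Square c ℓ) : ∃ k, dist p (gridPt c ℓ N k) ≤ 2 * ℓ / N := by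
  set d := ℓ / N
  have hd : 0 < d := by positivity
  have hNd : N * d = ℓ := by simp only [d]; field_simp
  have hcoord : ∀ i, ∃ k < N, |p i - (c i - ℓ / 2) - k * d| ≤ d := fun i => by
    have := abs_le.1 (hp i)
    exact exists_lt_abs_sub_nat_mul_le hd hN (by linarith) (by linarith)
  choose k hkN hk using hcoord
  refine ⟨fun i => ⟨k i, hkN i⟩, ?_⟩
  have hdist : ∀ i, dist (p i) (gridPt c ℓ N (fun i => ⟨k i, hkN i⟩) i) ≤ d := fun i => by
    rw [gridPt, PiLp.toLp_apply, Real.dist_eq, ← sub_sub]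
    exact hk i
  rw [EuclideanSpace.dist_eq, Real.sqrt_le_iff, Fin.sum_univ_two, mul_div_assoc]
  refine ⟨by positivity, ?_⟩
  nlinarith [pow_le_pow_left₀ dist_nonneg (hdist 0) 2, pow_le_pow_left₀ dist_nonneg (hdist 1) 2]

lemma exists_card_le_subset_biUnion_closedBall (c : Pt) {ℓ : ℝ} (hℓ : 0 < ℓ) {N : ℕ}
    (hN : 0 < N) : ∃ T : Finset Pt, T.card ≤ N ^ 2 ∧
      Square c ℓ ⊆ ⋃ p ∈ T, closedBall p (2 * ℓ / N) := by
  refine ⟨Finset.univ.image (gridPt c ℓ N), ?_, fun p hp => ?_⟩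
  · calc _ ≤ Fintype.card (Fin 2 → Fin N) := Finset.card_image_le
      _ = N ^ 2 := by simp
  · obtain ⟨k, hk⟩ := exists_dist_gridPt_le hℓ hN hp
    exact Set.mem_biUnion (Finset.mem_coe.2 (Finset.mem_image_of_mem _ (Finset.mem_univ k))) hk

namespace LowDensity

variable {lam : ℕ} {E : Finset (Pt × Pt)}

lemma card_filter_meets_closedBall_le (hld : LowDensity lam E) {r : ℝ} (hr : 0 < r)
    (p : Pt) :
    (E.filter fun e => r ≤ dist e.1 e.2 ∧ (seg e ∩ closedBall p r).Nonempty).card ≤ lam := by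
  rw [← Set.ncard_coe_finset, Finset.coe_filter]
  exact hld r hr p

lemma card_filter_meets_le (hld : LowDensity lam E) {r : ℝ} (hr : 0 < r) {S : Set Pt}
    {T : Finset Pt} (hT : S ⊆ ⋃ p ∈ T, closedBall p r) :
    (E.filter fun e => r ≤ dist e.1 e.2 ∧ (seg e ∩ S).Nonempty).card ≤ T.card * lam := by
  calc _ ≤ (T.biUnion fun p =>
          E.filter fun e => r ≤ dist e.1 e.2 ∧ (seg e ∩ closedBall p r).Nonempty).card := by
        refine Finset.card_le_card fun e he => ?_
        obtain ⟨he, hlen, x, hxe, hxS⟩ := Finset.mem_filter.1 he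
        obtain ⟨p, hpT, hxp⟩ := Set.mem_iUnion₂.1 (hT hxS)
        exact Finset.mem_biUnion.2 ⟨p, hpT, Finset.mem_filter.2 ⟨he, hlen, x, hxe, hxp⟩⟩
    _ ≤ ∑ p ∈ T, (E.filter fun e => r ≤ dist e.1 e.2 ∧
          (seg e ∩ closedBall p r).Nonempty).card := Finset.card_biUnion_le
    _ ≤ ∑ _p ∈ T, lam := Finset.sum_le_sum fun p _ => hld.card_filter_meets_closedBall_le hr p
    _ = T.card * lam := by rw [Finset.sum_const, smul_eq_mul]

lemma card_filter_le_diam_inter_square (hld : LowDensity lam E) (c : Pt) {ℓ r : ℝ}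
    (hℓ : 0 < ℓ) {N : ℕ} (hN : 0 < N) (hNr : 2 * ℓ / N = r) :
    (E.filter fun e => r ≤ Metric.diam (seg e ∩ Square c ℓ)).card ≤ N ^ 2 * lam := by
  have hr : 0 < r := hNr ▸ by positivity
  obtain ⟨T, hTcard, hT⟩ := exists_card_le_subset_biUnion_closedBall c hℓ hN
  rw [hNr] at hT
  calc _ ≤ (E.filter fun e => r ≤ dist e.1 e.2 ∧ (seg e ∩ Square c ℓ).Nonempty).card := by
        refine Finset.card_le_card (Finset.monotone_filter_right _ fun e _ he => ⟨?_, ?_⟩)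
        · exact he.trans ((Metric.diam_mono inter_subset_left (isBounded_seg e)).trans
            (diam_seg e).le)
        · by_contra hempty
          rw [Set.not_nonempty_iff_eq_empty.1 hempty, Metric.diam_empty] at he
          linarith
    _ ≤ T.card * lam := hld.card_filter_meets_le hr hT
    _ ≤ N ^ 2 * lam := Nat.mul_le_mul_right _ hTcard

end LowDensity

/-- Dyadic class bound: in a `λ`-low-density graph with straight-line embedding, the
edges with both endpoints in `3S` whose intersection with the square `S` (of side `ℓ`)
has length in `[ℓ/2^j, 2ℓ/2^j]` number at most `2^(2j+2)·λ`, and the total length of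
their intersections with `S` is at most `2^(j+3)·λ·ℓ`. -/
theorem stmt12 (lam : ℕ) (E : Finset (Pt × Pt)) (hld : LowDensity lam E)
    (c : Pt) (ℓ : ℝ) (hℓ : 0 < ℓ) (j : ℕ) :
    (E.filter (fun e => e.1 ∈ Square c (3 * ℓ) ∧ e.2 ∈ Square c (3 * ℓ) ∧
        ℓ / 2 ^ j ≤ Metric.diam (seg e ∩ Square c ℓ) ∧
        Metric.diam (seg e ∩ Square c ℓ) ≤ 2 * ℓ / 2 ^ j)).card ≤ 2 ^ (2 * j + 2) * lam ∧
    ∑ e ∈ E.filter (fun e => e.1 ∈ Square c (3 * ℓ) ∧ e.2 ∈ Square c (3 * ℓ) ∧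
        ℓ / 2 ^ j ≤ Metric.diam (seg e ∩ Square c ℓ) ∧
        Metric.diam (seg e ∩ Square c ℓ) ≤ 2 * ℓ / 2 ^ j),
      Metric.diam (seg e ∩ Square c ℓ) ≤ 2 ^ (j + 3) * lam * ℓ := by
  set F := E.filter (fun e => e.1 ∈ Square c (3 * ℓ) ∧ e.2 ∈ Square c (3 * ℓ) ∧
        ℓ / 2 ^ j ≤ Metric.diam (seg e ∩ Square c ℓ) ∧
        Metric.diam (seg e ∩ Square c ℓ) ≤ 2 * ℓ / 2 ^ j)
  have hcard : F.card ≤ 2 ^ (2 * j + 2) * lam := by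
    have hgrid : 2 * ℓ / ((2 ^ (j + 1) : ℕ) : ℝ) = ℓ / 2 ^ j := by
      push_cast; rw [pow_succ]; field_simp
    calc F.card ≤ (E.filter fun e => ℓ / 2 ^ j ≤ Metric.diam (seg e ∩ Square c ℓ)).card :=
          Finset.card_le_card (Finset.monotone_filter_right _ fun e _ he => he.2.2.1)
      _ ≤ (2 ^ (j + 1)) ^ 2 * lam :=
          hld.card_filter_le_diam_inter_square c hℓ (by positivity) hgrid
      _ = 2 ^ (2 * j + 2) * lam := by ring
  refine ⟨hcard, ?_⟩
  calc ∑ e ∈ F, Metric.diam (seg e ∩ Square c ℓ) ≤ F.card * (2 * ℓ / 2 ^ j) := by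
        rw [← nsmul_eq_mul]
        exact Finset.sum_le_card_nsmul _ _ _ fun e he => (Finset.mem_filter.1 he).2.2.2.2
    _ ≤ (2 ^ (2 * j + 2) * lam : ℕ) * (2 * ℓ / 2 ^ j) := by gcongr
    _ = 2 ^ (j + 3) * lam * ℓ := by push_cast; field_simp; ring
end
end

section
/- Side-length sandwich for congruent maximal pairs: let A' and B' be congruent axis-aligned quadtree squares of side length ℓ with point sets A ⊆ A' and B ⊆ B', such that (A', B') is (1/ε)-well-separated but (double(A'), double(B')) is not (1/ε)-well-separated, where double(X) is the quadtree square containing X of side 2ℓ, and 0 < ε < 1. Then ℓ lies in the range [c₁·ε·d₂(A,B), c₂·ε·d₂(A,B)] for constants c₁ = 1/(6√2) and c₂ = 1/√2. -/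
open Metric Set

noncomputable section

/-- Euclidean distance between two sets. -/
def dist2 (A B : Set Pt) : ℝ :=
  sInf {r : ℝ | ∃ a ∈ A, ∃ b ∈ B, r = dist a b}

/-!
The upper bound is immediate: `A ⊆ A'`, `B ⊆ B'` give `d(A,B) ≥ d(A',B') ≥ √2 ℓ / ε`.
For the lower bound, the triangle inequality through the doubled squares `2A'`, `2B'` gives
`d(A,B) ≤ d(2A', 2B') + diam 2A' + diam 2B' < 2√2 ℓ / ε + 4√2 ℓ ≤ 6√2 ℓ / ε`,
the last step using `ε < 1`.
-/

open Bornology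

section Square

variable {c : Pt} {ℓ : ℝ}

lemma abs_sub_apply_le_of_mem_square {p q : Pt} (hp : p ∈ Square c ℓ) (hq : q ∈ Square c ℓ)
    (i : Fin 2) : |p i - q i| ≤ ℓ := by
  have hpi := abs_le.mp (hp i)
  have hqi := abs_le.mp (hq i)
  exact abs_le.mpr ⟨by linarith, by linarith⟩

lemma dist_le_of_mem_square (hℓ : 0 ≤ ℓ) {p q : Pt} (hp : p ∈ Square c ℓ)
    (hq : q ∈ Square c ℓ) : dist p q ≤ √2 * ℓ := by
  have hcoord (i : Fin 2) : (p i - q i) ^ 2 ≤ ℓ ^ 2 :=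
    sq_le_sq' (abs_le.mp (abs_sub_apply_le_of_mem_square hp hq i)).1
      (abs_le.mp (abs_sub_apply_le_of_mem_square hp hq i)).2
  calc dist p q = √((p 0 - q 0) ^ 2 + (p 1 - q 1) ^ 2) := by
        simp [EuclideanSpace.dist_eq, Fin.sum_univ_two, Real.dist_eq, sq_abs]
    _ ≤ √(2 * ℓ ^ 2) := Real.sqrt_le_sqrt (by linarith [hcoord 0, hcoord 1])
    _ = √2 * ℓ := by rw [Real.sqrt_mul zero_le_two, Real.sqrt_sq hℓ]

lemma center_mem_square (hℓ : 0 ≤ ℓ) : c ∈ Square c ℓ := fun i => by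
  simpa using div_nonneg hℓ zero_le_two

lemma isBounded_square (hℓ : 0 ≤ ℓ) : IsBounded (Square c ℓ) :=
  isBounded_closedBall.subset fun _ hp => mem_closedBall.mpr <|
    dist_le_of_mem_square hℓ hp (center_mem_square hℓ)

lemma diam_square (hℓ : 0 ≤ ℓ) : diam (Square c ℓ) = √2 * ℓ := by
  refine le_antisymm (diam_le_of_forall_dist_le (by positivity)
    fun _ hp _ hq => dist_le_of_mem_square hℓ hp hq) ?_
  let p : Pt := WithLp.toLp 2 fun i => c i + ℓ / 2
  let q : Pt := WithLp.toLp 2 fun i => c i - ℓ / 2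
  have hp : p ∈ Square c ℓ := fun i => by simp [p, abs_of_nonneg (div_nonneg hℓ zero_le_two)]
  have hq : q ∈ Square c ℓ := fun i => by simp [q, abs_of_nonneg (div_nonneg hℓ zero_le_two)]
  calc √2 * ℓ = √(ℓ ^ 2 + ℓ ^ 2) := by
        rw [← two_mul, Real.sqrt_mul zero_le_two, Real.sqrt_sq hℓ]
    _ = dist p q := by
        simp [p, q, EuclideanSpace.dist_eq, Fin.sum_univ_two, Real.dist_eq]
        ring_nf
    _ ≤ diam (Square c ℓ) := dist_le_diam_of_mem (isBounded_square hℓ) hp hq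

end Square

section dist2

variable {A B X Y : Set Pt}

lemma bddBelow_dists (A B : Set Pt) : BddBelow {r : ℝ | ∃ a ∈ A, ∃ b ∈ B, r = dist a b} :=
  ⟨0, fun _ ⟨_, _, _, _, hr⟩ => hr ▸ dist_nonneg⟩

lemma dist2_le_dist {x y : Pt} (hx : x ∈ A) (hy : y ∈ B) : dist2 A B ≤ dist x y :=
  csInf_le (bddBelow_dists A B) ⟨x, hx, y, hy, rfl⟩

lemma dist2_anti (hAX : A ⊆ X) (hBY : B ⊆ Y) (hA : A.Nonempty) (hB : B.Nonempty) :
    dist2 X Y ≤ dist2 A B := by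
  obtain ⟨x, hx⟩ := hA
  obtain ⟨y, hy⟩ := hB
  refine csInf_le_csInf (bddBelow_dists X Y) ⟨_, x, hx, y, hy, rfl⟩ ?_
  rintro r ⟨a, ha, b, hb, rfl⟩
  exact ⟨a, hAX ha, b, hBY hb, rfl⟩

lemma dist2_le_dist2_add_diam (hAX : A ⊆ X) (hBY : B ⊆ Y) (hA : A.Nonempty) (hB : B.Nonempty)
    (hX : IsBounded X) (hY : IsBounded Y) :
    dist2 A B ≤ dist2 X Y + diam X + diam Y := by
  obtain ⟨x, hx⟩ := hA
  obtain ⟨y, hy⟩ := hB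
  suffices dist x y - diam X - diam Y ≤ dist2 X Y by
    linarith [dist2_le_dist hx hy]
  refine le_csInf ⟨_, x, hAX hx, y, hBY hy, rfl⟩ ?_
  rintro r ⟨u, hu, v, hv, rfl⟩
  have hxu := dist_le_diam_of_mem hX (hAX hx) hu
  have hvy := dist_le_diam_of_mem hY hv (hBY hy)
  linarith [dist_triangle4 x u v y]

end dist2

/-- Side-length sandwich for congruent maximal pairs: if the congruent quadtree squares
`A' = Square a ℓ` and `B' = Square b ℓ` containing the point sets `A` and `B` form a
`(1/ε)`-well-separated pair, but their doubles do not, then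
`ℓ ∈ [ε·d₂(A,B)/(6√2), ε·d₂(A,B)/√2]`. -/
theorem stmt17 (ε ℓ : ℝ) (hε : 0 < ε) (hε1 : ε < 1) (hℓ : 0 < ℓ)
    (a b a₂ b₂ : Pt) (A B : Set Pt)
    (hA : A ⊆ Square a ℓ) (hB : B ⊆ Square b ℓ)
    (hAne : A.Nonempty) (hBne : B.Nonempty)
    (hda : Square a ℓ ⊆ Square a₂ (2 * ℓ)) (hdb : Square b ℓ ⊆ Square b₂ (2 * ℓ))
    (hsep : (1 / ε) * max (Metric.diam (Square a ℓ)) (Metric.diam (Square b ℓ)) ≤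
      dist2 (Square a ℓ) (Square b ℓ))
    (hnsep : ¬ ((1 / ε) * max (Metric.diam (Square a₂ (2 * ℓ)))
        (Metric.diam (Square b₂ (2 * ℓ))) ≤
      dist2 (Square a₂ (2 * ℓ)) (Square b₂ (2 * ℓ)))) :
    (1 / (6 * Real.sqrt 2)) * ε * dist2 A B ≤ ℓ ∧
    ℓ ≤ (1 / Real.sqrt 2) * ε * dist2 A B := by
  have h2ℓ : 0 ≤ 2 * ℓ := by positivity
  have hs : 0 < √2 := by positivity
  simp only [diam_square hℓ.le, diam_square h2ℓ, max_self] at hsep hnsep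
  have hupper : √2 * ℓ ≤ ε * dist2 A B := by
    have := hsep.trans (dist2_anti hA hB hAne hBne)
    rw [one_div_mul_eq_div, div_le_iff₀ hε] at this
    linarith
  have hlower : ε * dist2 A B ≤ 6 * √2 * ℓ := by
    have hdouble := dist2_le_dist2_add_diam (hA.trans hda) (hB.trans hdb) hAne hBne
      (isBounded_square h2ℓ) (isBounded_square h2ℓ)
    rw [diam_square h2ℓ, diam_square h2ℓ] at hdouble
    have hεinv : ε * (1 / ε) = 1 := mul_one_div_cancel hε.ne'
    nlinarith [not_le.mp hnsep, mul_pos hs hℓ]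
  constructor
  · rw [one_div_mul_eq_div, div_mul_eq_mul_div, div_le_iff₀ (by positivity)]
    linarith
  · rw [one_div_mul_eq_div, div_mul_eq_mul_div, le_div_iff₀ hs]
    linarith
end
end
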